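/- If C is a ternary self-dual code of length 36 with minimum weight 9 and every codeword has weight at most 33, then the weight enumerator of C is uniquely 1 + 888y^9 + 34848y^12 + 1432224y^15 + 18377688y^18 + 90482256y^21 + 162551592y^24 + 97883072y^27 + 16178688y^30 + 479232y^33. -/

import Mathlib

set_option maxRecDepth 8000
set_option maxHeartbeats 4000000

open scoped Classical
open Polynomial

/-- Hamming weight of a ternary vector. -/
noncomputable def wt (c : Fin 36 → ZMod 3) : ℕ :=
  (Finset.univ.filter fun i => c i ≠ 0).card

abbrev Vt := Fin 36 → ZMod 3


noncomputable def Bdot : LinearMap.BilinForm (ZMod 3) Vt :=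
  LinearMap.mk₂ (ZMod 3) (fun x y => ∑ i, x i * y i)
    (by intro x x' y; simp [Finset.sum_add_distrib, add_mul])
    (by intro a x y; simp [Finset.mul_sum, mul_assoc])
    (by intro x y y'; simp [Finset.sum_add_distrib, mul_add])
    (by intro a x y; simp [Finset.mul_sum]; ring_nf; simp [mul_assoc, mul_comm, mul_left_comm])

lemma Bdot_apply (x y : Vt) : Bdot x y = ∑ i, x i * y i := rfl

lemma Bdot_refl : Bdot.IsRefl := by
  intro x y h
  rw [Bdot_apply] at h ⊢
  rw [← h]; exact Finset.sum_congr rfl fun i _ => mul_comm _ _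

lemma Bdot_nondeg : Bdot.Nondegenerate := by
  refine ⟨fun x hx => ?_, fun x hx => ?_⟩
  all_goals
  funext i
  have := hx (Pi.single i 1)
  rw [Bdot_apply] at this
  simpa [Pi.single_apply, Finset.sum_ite_eq'] using this

lemma card_C (C : Submodule (ZMod 3) Vt)
    (hsd : ∀ x : Vt, x ∈ C ↔ ∀ c ∈ C, ∑ i, x i * c i = 0) :
    (Finset.univ.filter (· ∈ C)).card = 3 ^ 18 := by
  have horth : Bdot.orthogonal C = C := by
    ext x
    rw [LinearMap.BilinForm.mem_orthogonal_iff, hsd]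
    constructor
    · intro h c hc
      have := h c hc
      rw [Bdot_apply] at this
      rw [← this]; exact Finset.sum_congr rfl fun i _ => mul_comm _ _
    · intro h c hc
      have := h c hc
      rw [Bdot_apply]
      rw [← this]; exact Finset.sum_congr rfl fun i _ => mul_comm _ _
  have hdim : Module.finrank (ZMod 3) C = 18 := by
    have h1 := LinearMap.BilinForm.finrank_add_finrank_orthogonal Bdot_refl C
    rw [LinearMap.BilinForm.orthogonal_top_eq_bot Bdot_nondeg, inf_bot_eq, finrank_bot, add_zero,
      horth, Module.finrank_fin_fun] at h1
    omega
  have : Fintype.card C = 3 ^ 18 := by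
    rw [Module.card_eq_pow_finrank (K := ZMod 3) (V := C), ZMod.card, hdim]
  rw [← this]
  rw [Fintype.card_subtype]

lemma proj_surj (C : Submodule (ZMod 3) Vt)
    (hsd : ∀ x : Vt, x ∈ C ↔ ∀ c ∈ C, ∑ i, x i * c i = 0)
    (hmin : ∀ c ∈ C, c ≠ 0 → 9 ≤ wt c)
    (T : Finset (Fin 36)) (hT : T.card ≤ 8) (y : ↥T → ZMod 3) :
    ∃ c ∈ C, ∀ j : ↥T, c j = y j := by
  set L : Vt →ₗ[ZMod 3] (↥T → ZMod 3) :=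
    LinearMap.funLeft (ZMod 3) (ZMod 3) (Subtype.val) with hL
  by_cases htop : C.map L = ⊤
  · have hy : y ∈ C.map L := htop ▸ Submodule.mem_top
    obtain ⟨c, hc, hcy⟩ := hy
    exact ⟨c, hc, fun j => by rw [← hcy]; rfl⟩
  · exfalso
    obtain ⟨f, hf0, hfbot⟩ :=
      Submodule.exists_dual_map_eq_bot_of_lt_top (lt_top_iff_ne_top.mpr htop) inferInstance
    have hfW : ∀ w ∈ C.map L, f w = 0 := by
      intro w hw
      have : f w ∈ (C.map L).map f := Submodule.mem_map_of_mem hw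
      rw [hfbot] at this
      exact (Submodule.mem_bot _).mp this
    have key : ∀ z : ↥T → ZMod 3, f z = ∑ j, z j * f (Pi.single j 1) := by
      intro z
      conv_lhs => rw [← Finset.univ_sum_single z]
      rw [map_sum]
      refine Finset.sum_congr rfl fun j _ => ?_
      have : Pi.single j (z j) = z j • (Pi.single j 1 : ↥T → ZMod 3) := by
        funext k
        simp [Pi.single_apply, Pi.smul_apply, smul_eq_mul, mul_ite]
      rw [this, map_smul, smul_eq_mul]
    have hex0 : ∃ j0 : ↥T, f (Pi.single j0 1) ≠ 0 := by
      by_contra hall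
      push_neg at hall
      apply hf0
      ext z
      simp [key z, hall]
    obtain ⟨j0, hj0⟩ := hex0
    set x : Vt := fun i => if h : i ∈ T then f (Pi.single (⟨i, h⟩ : ↥T) 1) else 0 with hx
    have hxC : x ∈ C := by
      rw [hsd]
      intro c hc
      have h1 : ∑ i, x i * c i = ∑ i ∈ T, x i * c i := by
        rw [Finset.sum_subset (Finset.subset_univ T)]
        intro i _ hi
        simp [hx, hi]
      have h2 : ∑ i ∈ T, x i * c i = ∑ j : ↥T, f (Pi.single j 1) * c j := by
        rw [← Finset.sum_attach T (fun i => x i * c i)]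
        refine Finset.sum_congr rfl fun j _ => ?_
        simp [hx, j.2]
      have h3 : (∑ j : ↥T, f (Pi.single j 1) * c j) = f (L c) := by
        rw [key (L c)]
        refine Finset.sum_congr rfl fun j _ => ?_
        rw [mul_comm]; rfl
      rw [h1, h2, h3]
      exact hfW _ (Submodule.mem_map_of_mem hc)
    have hxne : x ≠ 0 := by
      intro h0
      apply hj0
      have : x j0 = 0 := by rw [h0]; rfl
      simpa [hx, j0.2] using this
    have hwt : wt x ≤ T.card := by
      apply Finset.card_le_card
      intro i hi
      simp only [Finset.mem_filter] at hi
      by_contra hiT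
      exact hi.2 (by simp [hx, hiT])
    have := hmin x hxC hxne
    omega

lemma count_pattern (C : Submodule (ZMod 3) Vt)
    (hsd : ∀ x : Vt, x ∈ C ↔ ∀ c ∈ C, ∑ i, x i * c i = 0)
    (hmin : ∀ c ∈ C, c ≠ 0 → 9 ≤ wt c)
    (T : Finset (Fin 36)) (hT : T.card ≤ 8) :
    ((Finset.univ.filter (· ∈ C)).filter (fun c => ∀ i ∈ T, c i ≠ 0)).card
      = 2 ^ T.card * 3 ^ (18 - T.card) := by
  set CF := Finset.univ.filter (· ∈ C) with hCF
  set r : Vt → (↥T → ZMod 3) := fun c => fun j => c j with hr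
  -- all fibers have the same cardinality
  have hfib_eq : ∀ y y' : ↥T → ZMod 3,
      (CF.filter fun c => r c = y).card = (CF.filter fun c => r c = y').card := by
    intro y y'
    obtain ⟨c0, hc0, hc0y⟩ := proj_surj C hsd hmin T hT (y' - y)
    apply Finset.card_bij' (fun c _ => c + c0) (fun d _ => d - c0)
    · intro c hc
      simp only [Finset.mem_filter, hCF, Finset.mem_univ, true_and] at hc ⊢
      refine ⟨C.add_mem hc.1 hc0, ?_⟩
      funext j
      have := congrFun hc.2 j
      simp only [hr] at this ⊢
      rw [Pi.add_apply, this, hc0y j]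
      simp
    · intro d hd
      simp only [Finset.mem_filter, hCF, Finset.mem_univ, true_and] at hd ⊢
      refine ⟨C.sub_mem hd.1 hc0, ?_⟩
      funext j
      have := congrFun hd.2 j
      simp only [hr] at this ⊢
      rw [Pi.sub_apply, this, hc0y j]
      simp
    · intro c _; simp
    · intro d _; simp
  have hcardT : Fintype.card (↥T → ZMod 3) = 3 ^ T.card := by
    rw [Fintype.card_fun, ZMod.card, Fintype.card_coe]
  -- total: each fiber has card 3^(18 - T.card)
  have hfib : ∀ y : ↥T → ZMod 3,
      (CF.filter fun c => r c = y).card = 3 ^ (18 - T.card) := by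
    intro y
    have htot : CF.card = ∑ y' : ↥T → ZMod 3, (CF.filter fun c => r c = y').card :=
      Finset.card_eq_sum_card_fiberwise (fun c _ => Finset.mem_univ (r c))
    rw [card_C C hsd] at htot
    have : ∑ y' : ↥T → ZMod 3, (CF.filter fun c => r c = y').card
        = 3 ^ T.card * (CF.filter fun c => r c = y).card := by
      rw [Finset.sum_congr rfl (fun y' _ => hfib_eq y' y), Finset.sum_const, Finset.card_univ,
        hcardT, smul_eq_mul]
    rw [this] at htot
    have h3 : (3:ℕ) ^ 18 = 3 ^ T.card * 3 ^ (18 - T.card) := by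
      rw [← pow_add]; congr 1; omega
    rw [h3] at htot
    exact (Nat.eq_of_mul_eq_mul_left (Nat.pow_pos (by norm_num)) htot.symm)
  -- sum over all-nonzero patterns
  set YS : Finset (↥T → ZMod 3) := Finset.univ.filter (fun y => ∀ j, y j ≠ 0) with hYS
  have hmaps : ∀ c ∈ CF.filter (fun c => ∀ i ∈ T, c i ≠ 0), r c ∈ YS := by
    intro c hc
    simp only [Finset.mem_filter, hYS, Finset.mem_univ, true_and] at hc ⊢
    exact fun j => hc.2 j j.2
  have hsplit := Finset.card_eq_sum_card_fiberwise hmaps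
  have hinner : ∀ y ∈ YS, ((CF.filter (fun c => ∀ i ∈ T, c i ≠ 0)).filter
      (fun c => r c = y)).card = 3 ^ (18 - T.card) := by
    intro y hy
    rw [← hfib y]
    congr 1
    ext c
    simp only [Finset.mem_filter, and_assoc]
    constructor
    · rintro ⟨h1, _, h3⟩; exact ⟨h1, h3⟩
    · rintro ⟨h1, h3⟩
      refine ⟨h1, fun i hi => ?_, h3⟩
      simp only [hYS, Finset.mem_filter] at hy
      have := hy.2 ⟨i, hi⟩
      rw [← h3] at this
      exact this
  rw [hsplit, Finset.sum_congr rfl hinner, Finset.sum_const, smul_eq_mul]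
  congr 1
  -- card YS = 2 ^ T.card
  have : YS.card = Fintype.card (∀ _ : ↥T, {z : ZMod 3 // z ≠ 0}) := by
    rw [← Fintype.card_subtype]
    exact Fintype.card_congr (Equiv.subtypePiEquivPi (p := fun (_ : ↥T) (z : ZMod 3) => z ≠ 0))
  rw [this, Fintype.card_pi]
  have h2 : Fintype.card {z : ZMod 3 // z ≠ 0} = 2 := by decide
  simp [h2, Fintype.card_coe]

lemma moment (C : Submodule (ZMod 3) Vt)
    (hsd : ∀ x : Vt, x ∈ C ↔ ∀ c ∈ C, ∑ i, x i * c i = 0)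
    (hmin : ∀ c ∈ C, c ≠ 0 → 9 ≤ wt c)
    (t : ℕ) (ht : t ≤ 8) :
    ∑ c ∈ Finset.univ.filter (· ∈ C), Nat.choose (wt c) t
      = Nat.choose 36 t * (2 ^ t * 3 ^ (18 - t)) := by
  set CF := Finset.univ.filter (· ∈ C) with hCF
  have step1 : ∀ c : Vt, Nat.choose (wt c) t
      = ∑ T ∈ Finset.powersetCard t Finset.univ,
          (if T ⊆ Finset.univ.filter (fun i => c i ≠ 0) then 1 else 0) := by
    intro c
    rw [← Finset.sum_filter, Finset.sum_const, smul_eq_mul, mul_one]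
    have : (Finset.powersetCard t Finset.univ).filter
        (fun T => T ⊆ Finset.univ.filter (fun i => c i ≠ 0))
        = Finset.powersetCard t (Finset.univ.filter (fun i => c i ≠ 0)) := by
      ext T
      simp only [Finset.mem_filter, Finset.mem_powersetCard]
      constructor
      · rintro ⟨⟨_, h2⟩, h3⟩; exact ⟨h3, h2⟩
      · rintro ⟨h1, h2⟩; exact ⟨⟨Finset.subset_univ T, h2⟩, h1⟩
    rw [this, Finset.card_powersetCard]
    rfl
  calc ∑ c ∈ CF, Nat.choose (wt c) t
      = ∑ c ∈ CF, ∑ T ∈ Finset.powersetCard t Finset.univ,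
          (if T ⊆ Finset.univ.filter (fun i => c i ≠ 0) then 1 else 0) :=
        Finset.sum_congr rfl fun c _ => step1 c
    _ = ∑ T ∈ Finset.powersetCard t Finset.univ, ∑ c ∈ CF,
          (if T ⊆ Finset.univ.filter (fun i => c i ≠ 0) then 1 else 0) :=
        Finset.sum_comm
    _ = ∑ T ∈ Finset.powersetCard t Finset.univ, (2 ^ t * 3 ^ (18 - t)) := by
        refine Finset.sum_congr rfl fun T hT => ?_
        rw [Finset.mem_powersetCard] at hT
        have hTc : T.card = t := hT.2
        rw [← Finset.sum_filter, Finset.sum_const, smul_eq_mul, mul_one]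
        have : CF.filter (fun c => T ⊆ Finset.univ.filter (fun i => c i ≠ 0))
            = CF.filter (fun c => ∀ i ∈ T, c i ≠ 0) := by
          ext c
          simp [Finset.subset_iff]
        rw [this, count_pattern C hsd hmin T (by omega), hTc]
    _ = Nat.choose 36 t * (2 ^ t * 3 ^ (18 - t)) := by
        rw [Finset.sum_const, smul_eq_mul, Finset.card_powersetCard, Finset.card_univ,
          Fintype.card_fin]

theorem stmt18 (C : Submodule (ZMod 3) (Fin 36 → ZMod 3))
    (hsd : ∀ x : Fin 36 → ZMod 3, x ∈ C ↔ ∀ c ∈ C, ∑ i, x i * c i = 0)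
    (hmin : ∀ c ∈ C, c ≠ 0 → 9 ≤ wt c)
    (hex : ∃ c ∈ C, wt c = 9)
    (hmax : ∀ c ∈ C, wt c ≤ 33) :
    (∑ x : Fin 36 → ZMod 3, if x ∈ C then (X : Polynomial ℤ) ^ wt x else 0)
      = 1 + 888 * X ^ 9 + 34848 * X ^ 12 + 1432224 * X ^ 15
        + 18377688 * X ^ 18 + 90482256 * X ^ 21 + 162551592 * X ^ 24
        + 97883072 * X ^ 27 + 16178688 * X ^ 30 + 479232 * X ^ 33 := by
  set CF := Finset.univ.filter (· ∈ C) with hCF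
  set a : ℕ → ℕ := fun w => (CF.filter (fun c => wt c = w)).card with ha
  have hwt36 : ∀ c : Vt, wt c ≤ 36 := by
    intro c
    have := Finset.card_filter_le (Finset.univ : Finset (Fin 36)) (fun i => c i ≠ 0)
    simpa [wt] using this
  have hdvd : ∀ c ∈ C, (3:ℕ) ∣ wt c := by
    intro c hc
    have h0 : ∑ i, c i * c i = 0 := (hsd c).mp hc c hc
    have hsq : ∀ z : ZMod 3, z * z = if z ≠ 0 then 1 else 0 := by decide
    have h1 : ((wt c : ℕ) : ZMod 3) = ∑ i, if c i ≠ 0 then (1 : ZMod 3) else 0 := by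
      rw [wt, Finset.sum_boole]
    have h2 : (∑ i, if c i ≠ 0 then (1 : ZMod 3) else 0) = ∑ i, c i * c i :=
      Finset.sum_congr rfl fun i _ => (hsq (c i)).symm
    exact (ZMod.natCast_eq_zero_iff _ 3).mp (h1.trans (h2.trans h0))
  have hcases : ∀ c ∈ C, wt c = 0 ∨ (9 ≤ wt c ∧ wt c ≤ 33 ∧ 3 ∣ wt c) := by
    intro c hc
    by_cases hc0 : c = 0
    · left; subst hc0; simp [wt]
    · right; exact ⟨hmin c hc hc0, hmax c hc, hdvd c hc⟩
  have ha0 : a 0 = 1 := by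
    simp only [ha]
    have : CF.filter (fun c => wt c = 0) = {0} := by
      ext c
      simp only [Finset.mem_filter, hCF, Finset.mem_univ, true_and, Finset.mem_singleton]
      constructor
      · rintro ⟨_, hwc⟩
        funext i
        simp only [Pi.zero_apply]
        by_contra hci
        have : i ∈ Finset.univ.filter fun i => c i ≠ 0 := by simp [hci]
        rw [wt, Finset.card_eq_zero] at hwc
        rw [hwc] at this
        exact absurd this (Finset.notMem_empty i)
      · rintro rfl
        exact ⟨C.zero_mem, by simp [wt]⟩
    rw [this, Finset.card_singleton]
  have hz : ∀ w : ℕ, ¬(w = 0 ∨ w = 9 ∨ w = 12 ∨ w = 15 ∨ w = 18 ∨ w = 21 ∨ w = 24 ∨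
      w = 27 ∨ w = 30 ∨ w = 33) → a w = 0 := by
    intro w hw
    simp only [ha]
    rw [Finset.card_eq_zero, Finset.filter_eq_empty_iff]
    intro c hc hwc
    apply hw
    rw [hCF, Finset.mem_filter] at hc
    rcases hcases c hc.2 with h | h
    · left; omega
    · obtain ⟨h1, h2, h3⟩ := h; omega
  have hsum : ∀ {M : Type} [AddCommMonoid M] (g : ℕ → M),
      ∑ c ∈ CF, g (wt c) = a 0 • g 0 + a 9 • g 9 + a 12 • g 12 + a 15 • g 15 + a 18 • g 18 + a 21 • g 21 + a 24 • g 24 + a 27 • g 27 + a 30 • g 30 + a 33 • g 33 := by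
    intro M _ g
    have hmaps : ∀ c ∈ CF, wt c ∈ Finset.range 37 := fun c _ =>
      Finset.mem_range.mpr (lt_of_le_of_lt (hwt36 c) (by norm_num))
    have h1 : ∑ c ∈ CF, g (wt c) = ∑ w ∈ Finset.range 37, a w • g w := by
      rw [← Finset.sum_fiberwise_of_maps_to hmaps]
      refine Finset.sum_congr rfl fun w _ => ?_
      calc ∑ c ∈ CF.filter (fun c => wt c = w), g (wt c)
          = ∑ c ∈ CF.filter (fun c => wt c = w), g w :=
            Finset.sum_congr rfl (fun c hc => by rw [(Finset.mem_filter.mp hc).2])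
        _ = a w • g w := by rw [Finset.sum_const, ha]
    rw [h1]
    simp only [Finset.sum_range_succ, Finset.sum_range_zero]
    rw [hz 1 (by omega), hz 2 (by omega), hz 3 (by omega), hz 4 (by omega), hz 5 (by omega), hz 6 (by omega), hz 7 (by omega), hz 8 (by omega), hz 10 (by omega), hz 11 (by omega), hz 13 (by omega), hz 14 (by omega), hz 16 (by omega), hz 17 (by omega), hz 19 (by omega), hz 20 (by omega), hz 22 (by omega), hz 23 (by omega), hz 25 (by omega), hz 26 (by omega), hz 28 (by omega), hz 29 (by omega), hz 31 (by omega), hz 32 (by omega), hz 34 (by omega), hz 35 (by omega), hz 36 (by omega)]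
    simp only [zero_smul, add_zero, zero_add]
  have e0 := moment C hsd hmin 0 (by norm_num)
  rw [hsum (fun w => Nat.choose w 0)] at e0
  simp only [ha0, smul_eq_mul, one_mul] at e0
  norm_num [Nat.choose_eq_descFactorial_div_factorial, Nat.descFactorial, Nat.factorial] at e0
  have e1 := moment C hsd hmin 1 (by norm_num)
  rw [hsum (fun w => Nat.choose w 1)] at e1
  simp only [ha0, smul_eq_mul, one_mul] at e1
  norm_num [Nat.choose_eq_descFactorial_div_factorial, Nat.descFactorial, Nat.factorial] at e1
  have e2 := moment C hsd hmin 2 (by norm_num)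
  rw [hsum (fun w => Nat.choose w 2)] at e2
  simp only [ha0, smul_eq_mul, one_mul] at e2
  norm_num [Nat.choose_eq_descFactorial_div_factorial, Nat.descFactorial, Nat.factorial] at e2
  have e3 := moment C hsd hmin 3 (by norm_num)
  rw [hsum (fun w => Nat.choose w 3)] at e3
  simp only [ha0, smul_eq_mul, one_mul] at e3
  norm_num [Nat.choose_eq_descFactorial_div_factorial, Nat.descFactorial, Nat.factorial] at e3
  have e4 := moment C hsd hmin 4 (by norm_num)
  rw [hsum (fun w => Nat.choose w 4)] at e4
  simp only [ha0, smul_eq_mul, one_mul] at e4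
  norm_num [Nat.choose_eq_descFactorial_div_factorial, Nat.descFactorial, Nat.factorial] at e4
  have e5 := moment C hsd hmin 5 (by norm_num)
  rw [hsum (fun w => Nat.choose w 5)] at e5
  simp only [ha0, smul_eq_mul, one_mul] at e5
  norm_num [Nat.choose_eq_descFactorial_div_factorial, Nat.descFactorial, Nat.factorial] at e5
  have e6 := moment C hsd hmin 6 (by norm_num)
  rw [hsum (fun w => Nat.choose w 6)] at e6
  simp only [ha0, smul_eq_mul, one_mul] at e6
  norm_num [Nat.choose_eq_descFactorial_div_factorial, Nat.descFactorial, Nat.factorial] at e6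
  have e7 := moment C hsd hmin 7 (by norm_num)
  rw [hsum (fun w => Nat.choose w 7)] at e7
  simp only [ha0, smul_eq_mul, one_mul] at e7
  norm_num [Nat.choose_eq_descFactorial_div_factorial, Nat.descFactorial, Nat.factorial] at e7
  have e8 := moment C hsd hmin 8 (by norm_num)
  rw [hsum (fun w => Nat.choose w 8)] at e8
  simp only [ha0, smul_eq_mul, one_mul] at e8
  norm_num [Nat.choose_eq_descFactorial_div_factorial, Nat.descFactorial, Nat.factorial] at e8
  obtain ⟨v9, v12, v15, v18, v21, v24, v27, v30, v33⟩ :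
      a 9 = 888 ∧ a 12 = 34848 ∧ a 15 = 1432224 ∧ a 18 = 18377688 ∧ a 21 = 90482256 ∧
      a 24 = 162551592 ∧ a 27 = 97883072 ∧ a 30 = 16178688 ∧ a 33 = 479232 := by
    omega
  have hL : (∑ x : Fin 36 → ZMod 3, if x ∈ C then (X : Polynomial ℤ) ^ wt x else 0)
      = ∑ c ∈ CF, (X : Polynomial ℤ) ^ wt c := by
    rw [hCF, Finset.sum_filter]
  rw [hL, hsum (fun w => (X : Polynomial ℤ) ^ w), ha0, v9, v12, v15, v18, v21, v24, v27,
    v30, v33]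
  simp only [one_smul, pow_zero, nsmul_eq_mul, Nat.cast_ofNat]
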